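/- arXiv:2004.04638 — 2 statements merged into one kernel-verified Lean document; each statement's English description precedes it below -/
import Mathlib

section
/- Let T be a tree with diameter at least 6. Then for any pair of adjacent vertices u, v of T, the copy V(T̄) of the vertex set of the complement is contained in the convex hull of {ū, v̄} in the complementary prism TT̄. -/
/-!
Call a set `S` of vertices of `T` closed if it contains every vertex at distance `≥ 2` from both
ends of an edge of `T` lying in `S`. The vertices `a` with `ā` in the hull of `{ū, v̄}` form a closed
set: for such `a` and an edge `bc`, the path `b̄ ā c̄` is a geodesic of `TT̄`, since `b̄c̄` is not an
edge. Starting from the edge `uv`, closure first gives an edge at one end `x` of a pair at distance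
`≥ 6`, from it an edge at the other end `y`, and every vertex is at distance `≥ 3` from `x` or `y`.
-/

open SimpleGraph

/-- Adjacency of the complementary prism: copies of `G` and `Gᶜ` joined by a perfect matching. -/
def prismAdj {V : Type*} (G : SimpleGraph V) : V ⊕ V → V ⊕ V → Prop
  | Sum.inl a, Sum.inl b => G.Adj a b
  | Sum.inr a, Sum.inr b => Gᶜ.Adj a b
  | Sum.inl a, Sum.inr b => a = b
  | Sum.inr a, Sum.inl b => a = b

/-- The complementary prism `G G̅` of a graph `G`. -/
def compPrism {V : Type*} (G : SimpleGraph V) : SimpleGraph (V ⊕ V) where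
  Adj := prismAdj G
  symm := by
    constructor
    rintro (a | a) (b | b) h
    · exact h.symm
    · exact h.symm
    · exact h.symm
    · exact h.symm
  loopless := by
    constructor
    rintro (a | a) h
    · exact G.loopless.irrefl a h
    · exact Gᶜ.loopless.irrefl a h

/-- `w` lies on some shortest `u,v`-path (geodesic) of `H`. -/
def inInterval {V : Type*} (H : SimpleGraph V) (u v w : V) : Prop :=
  ∃ p : H.Walk u v, p.IsPath ∧ p.length = H.dist u v ∧ w ∈ p.support

/-- A set of vertices is geodesically convex. -/
def IsGeoConvex {V : Type*} (H : SimpleGraph V) (S : Set V) : Prop :=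
  ∀ u ∈ S, ∀ v ∈ S, ∀ w, inInterval H u v w → w ∈ S

/-- The geodesic convex hull: the smallest convex set containing `S`. -/
def geoHull {V : Type*} (H : SimpleGraph V) (S : Set V) : Set V :=
  ⋂₀ {C | IsGeoConvex H C ∧ S ⊆ C}

/-- The convexity number: maximum cardinality of a proper convex set. -/
noncomputable def convexityNumber {V : Type*} (H : SimpleGraph V) : ℕ :=
  sSup {n | ∃ S : Set V, IsGeoConvex H S ∧ S ≠ Set.univ ∧ S.ncard = n}

/-- The diameter of a graph. -/
noncomputable def graphDiam {V : Type*} (H : SimpleGraph V) : ℕ :=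
  sSup {d | ∃ u v : V, H.dist u v = d}

/-- The eccentricity of a vertex. -/
noncomputable def graphEcc {V : Type*} (H : SimpleGraph V) (u : V) : ℕ :=
  sSup {d | ∃ v : V, H.dist u v = d}

/-- The degree of a vertex. -/
noncomputable def vdeg {V : Type*} (H : SimpleGraph V) (v : V) : ℕ :=
  (H.neighborSet v).ncard

/-- The maximum degree. -/
noncomputable def maxDeg {V : Type*} (H : SimpleGraph V) : ℕ :=
  sSup {d | ∃ v : V, vdeg H v = d}

/-- The number of pendant neighbours of a vertex. -/
noncomputable def pendCount {V : Type*} (H : SimpleGraph V) (w : V) : ℕ :=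
  {v ∈ H.neighborSet w | vdeg H v = 1}.ncard

open Sum

section Convexity

variable {V : Type*} {H : SimpleGraph V}

lemma inInterval_of_adj_of_adj {a b c : V} (hba : H.Adj b a) (hac : H.Adj a c) (hbc : b ≠ c)
    (hnbc : ¬H.Adj b c) : inInterval H b c a := by
  let p : H.Walk b c := .cons hba (.cons hac .nil)
  have hdist : H.dist b c = 2 := by
    have := SimpleGraph.dist_le p
    have := p.reachable.one_lt_dist_of_ne_of_not_adj hbc hnbc
    simp only [p, Walk.length_cons, Walk.length_nil] at *
    omega
  refine ⟨p, ?_, by simp [p, hdist], by simp [p]⟩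
  simp [p, Walk.isPath_def, hba.ne, hac.ne, hbc]

lemma IsGeoConvex.mem_of_adj_of_adj {C : Set V} (hC : IsGeoConvex H C) {a b c : V}
    (hb : b ∈ C) (hc : c ∈ C) (hba : H.Adj b a) (hac : H.Adj a c) (hbc : b ≠ c)
    (hnbc : ¬H.Adj b c) : a ∈ C :=
  hC b hb c hc a (inInterval_of_adj_of_adj hba hac hbc hnbc)

lemma isGeoConvex_geoHull (S : Set V) : IsGeoConvex H (geoHull H S) :=
  fun _ hu _ hv w hw C hC => hC.1 _ (hu C hC) _ (hv C hC) w hw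

lemma subset_geoHull (S : Set V) : S ⊆ geoHull H S :=
  fun _ hx _ hC => hC.2 hx

end Convexity

section Distance

variable {V : Type*} {G : SimpleGraph V}

lemma exists_lt_dist_of_lt_graphDiam {n : ℕ} (h : n < graphDiam G) : ∃ x y, n < G.dist x y := by
  by_contra! hle
  exact (csSup_le' (by rintro _ ⟨x, y, rfl⟩; exact hle x y)).not_gt h

lemma ne_and_not_adj_of_two_le_dist {a b : V} (h : 2 ≤ G.dist a b) : a ≠ b ∧ ¬G.Adj a b := by
  refine ⟨?_, fun hab => ?_⟩
  · rintro rfl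
    simp at h
  · rw [dist_eq_one_iff_adj.mpr hab] at h
    omega

lemma SimpleGraph.Connected.exists_three_le_dist_of_adj (hconn : G.Connected) {u v x y : V} (huv : G.Adj u v)
    (hxy : 6 ≤ G.dist x y) : ∃ x' y', 6 ≤ G.dist x' y' ∧ 3 ≤ G.dist u x' ∧ 3 ≤ G.dist v x' := by
  by_cases hx : 3 ≤ G.dist u x ∧ 3 ≤ G.dist v x
  · exact ⟨x, y, hxy, hx⟩
  have : G.dist x y ≤ G.dist x u + G.dist u y := hconn.dist_triangle
  have : G.dist x y ≤ G.dist x v + G.dist v y := hconn.dist_triangle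
  have : G.dist u y ≤ G.dist u v + G.dist v y := hconn.dist_triangle
  have : G.dist v y ≤ G.dist v u + G.dist u y := hconn.dist_triangle
  have : G.dist u v = 1 := dist_eq_one_iff_adj.mpr huv
  have : G.dist v u = 1 := dist_eq_one_iff_adj.mpr huv.symm
  have : G.dist x u = G.dist u x := dist_comm
  have : G.dist x v = G.dist v x := dist_comm
  exact ⟨y, x, by rwa [dist_comm], by omega, by omega⟩

end Distance

def FarEdgeClosed {V : Type*} (T : SimpleGraph V) (S : Set V) : Prop :=
  ∀ ⦃a b c⦄, T.Adj b c → b ∈ S → c ∈ S → 2 ≤ T.dist b a → 2 ≤ T.dist c a → a ∈ S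

section FarEdgeClosed

variable {V : Type*} {T : SimpleGraph V} {S : Set V}

lemma FarEdgeClosed.mem_of_three_le_dist (hconn : T.Connected) (hS : FarEdgeClosed T S)
    {a b c : V} (hbc : T.Adj b c) (hb : b ∈ S) (hc : c ∈ S) (hba : 3 ≤ T.dist b a) : a ∈ S := by
  have hbc' : T.dist b c = 1 := dist_eq_one_iff_adj.mpr hbc
  have : T.dist b a ≤ T.dist b c + T.dist c a := hconn.dist_triangle
  exact hS hbc hb hc (by omega) (by omega)

lemma FarEdgeClosed.exists_adj_mem (hconn : T.Connected) (hS : FarEdgeClosed T S)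
    {b c x : V} (hbc : T.Adj b c) (hb : b ∈ S) (hc : c ∈ S) (hbx : 3 ≤ T.dist b x)
    (hcx : 3 ≤ T.dist c x) : ∃ n, T.Adj x n ∧ x ∈ S ∧ n ∈ S := by
  have hxb : x ≠ b := fun h => by subst h; simp at hbx
  obtain ⟨n, hxn⟩ := (hconn x b).nonempty_neighborSet_left hxb
  have hxn' : T.dist x n = 1 := dist_eq_one_iff_adj.mpr hxn
  have : T.dist b x ≤ T.dist b n + T.dist n x := hconn.dist_triangle
  have : T.dist c x ≤ T.dist c n + T.dist n x := hconn.dist_triangle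
  rw [dist_comm (u := n)] at *
  exact ⟨n, hxn, hS hbc hb hc (by omega) (by omega), hS hbc hb hc (by omega) (by omega)⟩

theorem FarEdgeClosed.eq_univ (hconn : T.Connected) (hS : FarEdgeClosed T S) {u v x y : V}
    (huv : T.Adj u v) (hu : u ∈ S) (hv : v ∈ S) (hxy : 6 ≤ T.dist x y) (hux : 3 ≤ T.dist u x)
    (hvx : 3 ≤ T.dist v x) : S = Set.univ := by
  obtain ⟨n, hxn, hx, hn⟩ := hS.exists_adj_mem hconn huv hu hv hux hvx
  have hny : 5 ≤ T.dist n y := by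
    have : T.dist x y ≤ T.dist x n + T.dist n y := hconn.dist_triangle
    rw [dist_eq_one_iff_adj.mpr hxn] at this
    omega
  obtain ⟨m, hym, hy, hm⟩ := hS.exists_adj_mem (x := y) hconn hxn hx hn (by omega) (by omega)
  refine Set.eq_univ_of_forall fun a => ?_
  have : T.dist x y ≤ T.dist x a + T.dist a y := hconn.dist_triangle
  rw [dist_comm (u := a)] at this
  by_cases hxa : 3 ≤ T.dist x a
  · exact hS.mem_of_three_le_dist hconn hxn hx hn hxa
  · exact hS.mem_of_three_le_dist hconn hym hy hm (by omega)

end FarEdgeClosed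

lemma compPrism_adj_inr {V : Type*} {T : SimpleGraph V} {a b : V} :
    (compPrism T).Adj (inr a) (inr b) ↔ a ≠ b ∧ ¬T.Adj a b :=
  Iff.rfl

lemma farEdgeClosed_compPrism_geoHull {V : Type*} (T : SimpleGraph V) (s : Set (V ⊕ V)) :
    FarEdgeClosed T {a | inr a ∈ geoHull (compPrism T) s} := by
  intro a b c hbc hb hc hba hca
  obtain ⟨hba, hba'⟩ := ne_and_not_adj_of_two_le_dist hba
  obtain ⟨hca, hca'⟩ := ne_and_not_adj_of_two_le_dist hca
  exact (isGeoConvex_geoHull s).mem_of_adj_of_adj hb hc (compPrism_adj_inr.mpr ⟨hba, hba'⟩)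
    (compPrism_adj_inr.mpr ⟨hca.symm, fun h => hca' h.symm⟩) (by simpa using hbc.ne)
    (fun h => (compPrism_adj_inr.mp h).2 hbc)

theorem stmt3_general {V : Type*} (T : SimpleGraph V) (hT : T.IsTree)
    (hd : 6 ≤ graphDiam T) (u v : V) (huv : T.Adj u v) :
    Set.range Sum.inr ⊆ geoHull (compPrism T) {Sum.inr u, Sum.inr v} := by
  obtain ⟨x₀, y₀, hxy₀⟩ := exists_lt_dist_of_lt_graphDiam (n := 5) hd
  obtain ⟨x, y, hxy, hux, hvx⟩ := hT.connected.exists_three_le_dist_of_adj huv hxy₀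
  have hS := (farEdgeClosed_compPrism_geoHull T {inr u, inr v}).eq_univ hT.connected huv
    (subset_geoHull _ (by simp)) (subset_geoHull _ (by simp)) hxy hux hvx
  rintro _ ⟨a, rfl⟩
  exact Set.eq_univ_iff_forall.mp hS a

theorem stmt3 {V : Type*} [Fintype V] (T : SimpleGraph V) (hT : T.IsTree)
    (hd : 6 ≤ graphDiam T) (u v : V) (huv : T.Adj u v) :
    Set.range Sum.inr ⊆ geoHull (compPrism T) {Sum.inr u, Sum.inr v} :=
  stmt3_general T hT hd u v huv
end

section
/- If T is a tree with diameter at least 5, then the convexity number of the complementary prism TT̄ equals max{n(T), 2Δ(T) + 1}, where n(T) is the number of vertices of T and Δ(T) its maximum degree. -/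
open SimpleGraph

/-!
Lower bound: the copy of `T̄` is convex, because two of its vertices that are adjacent in `T` have
a common non-neighbour (the radius of `T` is at least 3) and all their common neighbours in `TT̄`
lie in `T̄`; and for `c` of maximum degree, `N_T[c]` together with the copy of `N_T(c)` in `T̄` is a
convex set of size `2Δ + 1`, since all of its pairs are at distance at most 2 and it contains
their common neighbours.

Upper bound: let `S` be convex with more than `n` and more than `2Δ + 1` vertices, with traces
`A` on `T` and `B` on `T̄`. A vertex `c ∈ A` with `c̄ ∉ B` forces `B ⊆ N(c)`, hence `|A| > Δ + 1`
and some `a ∈ A` lies outside `N[c]`; then `B` is contained in the common neighbourhood of `a` and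
`c`, which in a tree is at most one vertex `b`, and convexity gives `A ⊆ N[b]`, a contradiction.
Hence `A ⊆ B`. If `W = V ∖ B` were nonempty, every edge inside `B` would dominate `W` and every
vertex of `W` would have at most one neighbour in `A`; together with `|A| > |W|` this yields a
vertex within distance 2 of every vertex, which contradicts diameter at least 5. So `B = V`, and then `A = V` by connectivity.
-/

open SimpleGraph Set Sum

namespace SimpleGraph

variable {W : Type*} {G : SimpleGraph W} {u v w : W}

theorem edist_le_two_iff :
    G.edist u v ≤ 2 ↔ u = v ∨ G.Adj u v ∨ ∃ w, G.Adj u w ∧ G.Adj w v := by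
  rw [← not_lt, two_lt_edist_iff]
  simp only [Set.eq_empty_iff_forall_notMem, mem_commonNeighbors, not_and, not_forall, not_not,
    G.adj_comm v]
  tauto

theorem exists_two_lt_edist_of_five_le_dist (hG : G.Connected) (huv : 5 ≤ G.dist u v) (c : W) :
    ∃ w, 2 < G.edist w c := by
  by_contra! h
  have : G.edist u v ≤ 4 :=
    calc G.edist u v ≤ G.edist u c + G.edist c v := SimpleGraph.edist_triangle
      _ ≤ 2 + 2 := add_le_add (h u) (edist_comm ▸ h v)
      _ = 4 := by norm_num
  rw [← (hG u v).coe_dist_eq_edist] at this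
  norm_cast at this
  omega

theorem IsAcyclic.not_adj_of_adj_of_adj (hG : G.IsAcyclic) (huv : G.Adj u v) (hvw : G.Adj v w) :
    ¬G.Adj u w := by
  classical
  exact fun huw => hG.cliqueFree le_rfl {u, v, w} (is3Clique_triple_iff.mpr ⟨huv, huw, hvw⟩)

theorem IsAcyclic.commonNeighbors_subsingleton (hG : G.IsAcyclic) (huv : u ≠ v) :
    (G.commonNeighbors u v).Subsingleton := by
  have hpath : ∀ {z} (huz : G.Adj u z) (hvz : G.Adj v z),
      (Walk.cons huz (Walk.cons hvz.symm .nil)).IsPath := fun huz hvz => by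
    simp [huz.ne, hvz.ne', huv]
  intro x hx y hy
  obtain ⟨hux, hvx⟩ := G.mem_commonNeighbors.mp hx
  obtain ⟨huy, hvy⟩ := G.mem_commonNeighbors.mp hy
  have h := congrArg Subtype.val
    ((hG.subsingleton_path u v).elim ⟨_, hpath hux hvx⟩ ⟨_, hpath huy hvy⟩)
  simpa using congrArg Walk.snd h

theorem Walk.eq_or_eq_or_mem_commonNeighbors (p : G.Walk u v) (hp : p.length ≤ 2)
    (hw : w ∈ p.support) : w = u ∨ w = v ∨ (p.length = 2 ∧ w ∈ G.commonNeighbors u v) := by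
  match p, hp with
  | .nil, _ => simp_all
  | .cons h .nil, _ => simp_all
  | .cons h (.cons h' .nil), _ =>
    simp only [support_cons, support_nil, List.mem_cons, List.not_mem_nil, or_false] at hw
    rcases hw with rfl | rfl | rfl <;> simp_all [mem_commonNeighbors, h'.symm]
  | .cons _ (.cons _ (.cons _ _)), hp => simp at hp

end SimpleGraph

theorem exists_le_dist_of_le_graphDiam {W : Type*} {G : SimpleGraph W} {k : ℕ} (hk : k ≠ 0)
    (h : k ≤ graphDiam G) : ∃ u v, k ≤ G.dist u v := by
  by_contra! hlt
  have : graphDiam G ≤ k - 1 := csSup_le' (by rintro _ ⟨u, v, rfl⟩; have := hlt u v; omega)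
  omega

section Convexity

variable {W : Type*} {G : SimpleGraph W} {S : Set W} {u v x : W}

theorem IsGeoConvex.mem_of_mem_support (hS : IsGeoConvex G S) (hu : u ∈ S) (hv : v ∈ S)
    (p : G.Walk u v) (hp : p.length ≤ G.dist u v) {w : W} (hw : w ∈ p.support) : w ∈ S :=
  have hlen : p.length = G.dist u v := le_antisymm hp (dist_le p)
  hS u hu v hv w ⟨p, p.isPath_of_length_eq_dist hlen, hlen, hw⟩

theorem IsGeoConvex.mem_of_adj_of_adj_s7 (hS : IsGeoConvex G S) (hu : u ∈ S) (hv : v ∈ S)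
    (huv : u ≠ v) (hnadj : ¬G.Adj u v) (hux : G.Adj u x) (hxv : G.Adj x v) : x ∈ S :=
  hS.mem_of_mem_support hu hv (.cons hux (.cons hxv .nil))
    ((Walk.cons hux (.cons hxv .nil)).reachable.one_lt_dist_of_ne_of_not_adj huv hnadj) (by simp)

theorem isGeoConvex_of_commonNeighbors_subset
    (h : ∀ u ∈ S, ∀ v ∈ S, u ≠ v → ¬G.Adj u v →
      (G.commonNeighbors u v).Nonempty ∧ G.commonNeighbors u v ⊆ S) :
    IsGeoConvex G S := by
  rintro u hu v hv w ⟨p, -, hp, hw⟩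
  have hle : G.dist u v ≤ 2 := by
    by_cases huv : u = v
    · simp [huv]
    by_cases hadj : G.Adj u v
    · simp [dist_eq_one_iff_adj.mpr hadj]
    obtain ⟨x, hx⟩ := (h u hu v hv huv hadj).1
    obtain ⟨hux, hvx⟩ := G.mem_commonNeighbors.mp hx
    exact dist_le (.cons hux (.cons hvx.symm .nil))
  rcases p.eq_or_eq_or_mem_commonNeighbors (hp ▸ hle) hw with rfl | rfl | ⟨h2, hw⟩
  · exact hu
  · exact hv
  · rw [hp] at h2
    have huv : u ≠ v := by rintro rfl; simp at h2
    have hnadj : ¬G.Adj u v := fun hadj => by simp [dist_eq_one_iff_adj.mpr hadj] at h2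
    exact (h u hu v hv huv hnadj).2 hw

end Convexity

section ComplementaryPrism

variable {V : Type*} {T : SimpleGraph V} {S : Set (V ⊕ V)} {a b x z : V}

@[simp] theorem compPrism_adj_inl_inl : (compPrism T).Adj (inl a) (inl b) ↔ T.Adj a b := Iff.rfl

@[simp] theorem compPrism_adj_inr_inr :
    (compPrism T).Adj (inr a) (inr b) ↔ a ≠ b ∧ ¬T.Adj a b :=
  compl_adj T a b

@[simp] theorem compPrism_adj_inl_inr : (compPrism T).Adj (inl a) (inr b) ↔ a = b := Iff.rfl

@[simp] theorem compPrism_adj_inr_inl : (compPrism T).Adj (inr a) (inl b) ↔ a = b := Iff.rfl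

namespace IsGeoConvex

theorem inl_mem_of_adj_of_adj (hS : IsGeoConvex (compPrism T) S) (ha : inl a ∈ S)
    (hb : inl b ∈ S) (hab : a ≠ b) (hnadj : ¬T.Adj a b) (hax : T.Adj a x) (hxb : T.Adj x b) :
    inl x ∈ S :=
  hS.mem_of_adj_of_adj_s7 ha hb (by simpa) (by simpa) (by simpa) (by simpa)

theorem inl_mem_of_adj_of_inr_mem (hS : IsGeoConvex (compPrism T) S) (ha : inl a ∈ S)
    (hb : inr b ∈ S) (hab : T.Adj a b) : inl b ∈ S :=
  hS.mem_of_adj_of_adj_s7 ha hb (by simp) (by simpa using hab.ne) (by simpa) (by simp)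

theorem inr_mem_of_not_adj_of_inr_mem (hS : IsGeoConvex (compPrism T) S) (ha : inl a ∈ S)
    (hb : inr b ∈ S) (hab : a ≠ b) (hnadj : ¬T.Adj a b) : inr a ∈ S :=
  hS.mem_of_adj_of_adj_s7 ha hb (by simp) (by simpa) (by simp) (by simpa using ⟨hab, hnadj⟩)

theorem adj_or_adj_of_inr_notMem (hS : IsGeoConvex (compPrism T) S) (ha : inr a ∈ S)
    (hb : inr b ∈ S) (hab : T.Adj a b) (hz : inr z ∉ S) : T.Adj z a ∨ T.Adj z b := by
  by_contra! h
  have hza : z ≠ a := by rintro rfl; exact hz ha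
  have hzb : z ≠ b := by rintro rfl; exact hz hb
  refine hz (hS.mem_of_adj_of_adj_s7 ha hb (by simpa using hab.ne) (by simp [hab]) ?_ ?_)
  · simpa using ⟨hza.symm, fun h' => h.1 h'.symm⟩
  · simpa using ⟨hzb, h.2⟩

theorem eq_of_adj_of_adj_of_inl_notMem (hT : T.IsAcyclic) (hS : IsGeoConvex (compPrism T) S)
    (hz : inl z ∉ S) (ha : inl a ∈ S) (hb : inl b ∈ S) (hza : T.Adj z a) (hzb : T.Adj z b) :
    a = b := by
  by_contra hab
  exact hz (hS.inl_mem_of_adj_of_adj ha hb hab (hT.not_adj_of_adj_of_adj hza.symm hzb) hza.symm hzb)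

end IsGeoConvex

end ComplementaryPrism

theorem Set.ncard_image_inl_union_image_inr {α β : Type*} [Finite α] [Finite β] (s : Set α)
    (t : Set β) : (inl '' s ∪ inr '' t).ncard = s.ncard + t.ncard := by
  rw [ncard_union_eq disjoint_image_inl_image_inr, ncard_image_of_injective _ inl_injective,
    ncard_image_of_injective _ inr_injective]

theorem Set.ncard_eq_ncard_preimage_inl_add_ncard_preimage_inr {α β : Type*} [Finite α]
    [Finite β] (S : Set (α ⊕ β)) : S.ncard = (inl ⁻¹' S).ncard + (inr ⁻¹' S).ncard := by
  conv_lhs => rw [← image_preimage_inl_union_image_preimage_inr S]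
  exact ncard_image_inl_union_image_inr _ _

section Degree

variable {V : Type*} [Finite V] (T : SimpleGraph V)

theorem vdeg_le_maxDeg (v : V) : vdeg T v ≤ maxDeg T :=
  le_csSup (finite_range _).bddAbove ⟨v, rfl⟩

theorem exists_vdeg_eq_maxDeg [Nonempty V] : ∃ c, vdeg T c = maxDeg T :=
  (range_nonempty _).csSup_mem (finite_range _)

variable {T}

theorem ncard_le_maxDeg_add_one {s : Set V} {v : V} (h : s ⊆ insert v (T.neighborSet v)) :
    s.ncard ≤ maxDeg T + 1 :=
  calc s.ncard ≤ (insert v (T.neighborSet v)).ncard := ncard_le_ncard h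
    _ ≤ vdeg T v + 1 := ncard_insert_le _ _
    _ ≤ maxDeg T + 1 := by grw [vdeg_le_maxDeg T v]

end Degree

section LowerBound

variable {V : Type*} {T : SimpleGraph V}

theorem isGeoConvex_range_inr (hrad : ∀ c, ∃ v, 2 < T.edist v c) :
    IsGeoConvex (compPrism T) (range inr) := by
  refine isGeoConvex_of_commonNeighbors_subset ?_
  rintro _ ⟨a, rfl⟩ _ ⟨b, rfl⟩ hne hnadj
  simp only [ne_eq, inr.injEq, compPrism_adj_inr_inr, not_and, not_not] at hne hnadj
  have hab := hnadj hne
  obtain ⟨v, hv⟩ := hrad a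
  obtain ⟨hva, hnva, hcn⟩ := two_lt_edist_iff.mp hv
  have hvb : v ≠ b := by rintro rfl; exact hnva hab.symm
  have hnvb : ¬T.Adj v b := fun h =>
    (eq_empty_iff_forall_notMem.mp hcn) b (T.mem_commonNeighbors.mpr ⟨h, hab⟩)
  refine ⟨⟨inr v, ?_⟩, ?_⟩
  · simp [mem_commonNeighbors, hva.symm, hvb.symm, T.adj_comm _ v, hnva, hnvb]
  · rintro (m | m) hm
    · simp only [mem_commonNeighbors, compPrism_adj_inr_inl] at hm
      exact (hne (hm.1.trans hm.2.symm)).elim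
    · exact ⟨m, rfl⟩

def prismStar (T : SimpleGraph V) (c : V) : Set (V ⊕ V) :=
  inl '' insert c (T.neighborSet c) ∪ inr '' T.neighborSet c

theorem inr_notMem_prismStar (c : V) : inr c ∉ prismStar T c := by
  simp [prismStar]

theorem ncard_prismStar [Finite V] (c : V) : (prismStar T c).ncard = 2 * vdeg T c + 1 := by
  rw [prismStar, ncard_image_inl_union_image_inr, ncard_insert_of_notMem (by simp), vdeg]
  ring

theorem compPrism_commonNeighbors_inl_inr_nonempty {p q : V} (hpq : p ≠ q) :
    ((compPrism T).commonNeighbors (inl p) (inr q)).Nonempty := by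
  by_cases hadj : T.Adj p q
  · exact ⟨inl q, by simp [mem_commonNeighbors, hadj]⟩
  · exact ⟨inr p, by simp [mem_commonNeighbors, hpq.symm, T.adj_comm q, hadj]⟩

theorem commonNeighbors_inl_inr_subset_prismStar {c p q : V} (hp : p = c ∨ T.Adj c p)
    (hq : T.Adj c q) : (compPrism T).commonNeighbors (inl p) (inr q) ⊆ prismStar T c := by
  rintro (m | m) hm <;> simp only [mem_commonNeighbors, compPrism_adj_inl_inl,
    compPrism_adj_inl_inr, compPrism_adj_inr_inr, compPrism_adj_inr_inl] at hm
  · simp [prismStar, ← hm.2, hq]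
  · obtain ⟨rfl, -, hnqp⟩ := hm
    have : T.Adj c p := hp.resolve_left (by rintro rfl; exact hnqp hq.symm)
    simp [prismStar, this]

theorem isGeoConvex_prismStar (hT : T.IsAcyclic) (c : V) :
    IsGeoConvex (compPrism T) (prismStar T c) := by
  refine isGeoConvex_of_commonNeighbors_subset ?_
  rintro (p | p) hp (q | q) hq hne hnadj <;>
    simp only [prismStar, mem_union, mem_image, mem_insert_iff, mem_neighborSet, inl.injEq,
      inr.injEq, reduceCtorEq, and_false, exists_false, exists_eq_right, or_false, false_or,
      ne_eq] at hp hq hne hnadj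
  · have hcp : T.Adj c p :=
      hp.resolve_left (by rintro rfl; exact hnadj (hq.resolve_left (Ne.symm hne)))
    have hcq : T.Adj c q := hq.resolve_left (by rintro rfl; exact hnadj hcp.symm)
    refine ⟨⟨inl c, by simp [mem_commonNeighbors, hcp.symm, hcq.symm]⟩, ?_⟩
    rintro (m | m) hm <;>
      simp only [mem_commonNeighbors, compPrism_adj_inl_inl, compPrism_adj_inl_inr] at hm
    · have : m = c := hT.commonNeighbors_subsingleton hne (T.mem_commonNeighbors.mpr hm)
        (T.mem_commonNeighbors.mpr ⟨hcp.symm, hcq.symm⟩)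
      simp [prismStar, this]
    · exact (hne (hm.1.trans hm.2.symm)).elim
  · exact ⟨compPrism_commonNeighbors_inl_inr_nonempty hnadj,
      commonNeighbors_inl_inr_subset_prismStar hp hq⟩
  · rw [commonNeighbors_symm]
    exact ⟨compPrism_commonNeighbors_inl_inr_nonempty (Ne.symm hnadj),
      commonNeighbors_inl_inr_subset_prismStar hq hp⟩
  · exact (hT.not_adj_of_adj_of_adj hp.symm hq (by simpa [hne] using hnadj)).elim

end LowerBound

namespace IsGeoConvex

variable {V : Type*} {T : SimpleGraph V} {S : Set (V ⊕ V)} {a w w₀ w₁ x y : V}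

theorem preimage_inr_subset_neighborSet (hS : IsGeoConvex (compPrism T) S) (ha : inl a ∈ S)
    (ha' : inr a ∉ S) : inr ⁻¹' S ⊆ T.neighborSet a := by
  intro b hb
  by_contra hnadj
  exact ha' (hS.inr_mem_of_not_adj_of_inr_mem ha hb (by rintro rfl; exact ha' hb) hnadj)

theorem preimage_inl_subset_preimage_inr [Finite V] (hT : T.IsAcyclic)
    (hS : IsGeoConvex (compPrism T) S) (hn : Nat.card V < S.ncard)
    (hΔ : 2 * maxDeg T + 1 < S.ncard) : inl ⁻¹' S ⊆ inr ⁻¹' S := by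
  intro c hcA
  by_contra hcB
  have hS_card := S.ncard_eq_ncard_preimage_inl_add_ncard_preimage_inr
  have hBc := hS.preimage_inr_subset_neighborSet hcA hcB
  have hBΔ : (inr ⁻¹' S).ncard ≤ maxDeg T := (ncard_le_ncard hBc).trans (vdeg_le_maxDeg T c)
  obtain ⟨a, haA, hac⟩ : ∃ a ∈ inl ⁻¹' S, a ∉ insert c (T.neighborSet c) := by
    by_contra! h
    have := ncard_le_maxDeg_add_one h
    omega
  have hBca : inr ⁻¹' S ⊆ T.commonNeighbors c a := fun b hb =>
    ⟨hBc hb, hS.preimage_inr_subset_neighborSet haA (fun h => hac (mem_insert_of_mem _ (hBc h))) hb⟩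
  have hBsub : (inr ⁻¹' S).Subsingleton :=
    (hT.commonNeighbors_subsingleton (by rintro rfl; exact hac (mem_insert _ _))).anti hBca
  obtain ⟨b, hb⟩ : (inr ⁻¹' S).Nonempty := by
    apply nonempty_of_ncard_ne_zero
    have := ncard_le_card (inl ⁻¹' S)
    omega
  have hAb : inl ⁻¹' S ⊆ insert b (T.neighborSet b) := by
    intro a' ha'
    by_contra h
    simp only [mem_insert_iff, mem_neighborSet, not_or] at h
    exact h.1 (hBsub (hS.inr_mem_of_not_adj_of_inr_mem ha' hb h.1 (fun h' => h.2 h'.symm)) hb)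
  have := ncard_le_maxDeg_add_one hAb
  omega

theorem exists_adj_inl_mem [Finite V] (hT : T.IsAcyclic) (hnbr : ∀ v, ∃ u, T.Adj v u)
    (hS : IsGeoConvex (compPrism T) S) (hAB : inl ⁻¹' S ⊆ inr ⁻¹' S)
    (hcard : (inr ⁻¹' S)ᶜ.ncard < (inl ⁻¹' S).ncard) :
    ∃ x y, inl x ∈ S ∧ inl y ∈ S ∧ T.Adj x y := by
  by_contra! hno
  choose f hf using hnbr
  have hmaps : ∀ a ∈ inl ⁻¹' S, f a ∈ (inr ⁻¹' S)ᶜ := fun a ha hfa =>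
    hno a (f a) ha (hS.inl_mem_of_adj_of_inr_mem ha hfa (hf a)) (hf a)
  have hinj : InjOn f (inl ⁻¹' S) := fun a₁ h₁ a₂ h₂ h =>
    hS.eq_of_adj_of_adj_of_inl_notMem hT (fun h' => hmaps a₁ h₁ (hAB h')) h₁ h₂ (hf a₁).symm
      (h ▸ (hf a₂).symm)
  exact (ncard_le_ncard_of_injOn f hmaps hinj).not_gt hcard

theorem eq_or_eq_of_adj_of_inr_notMem (hT : T.IsAcyclic) (hS : IsGeoConvex (compPrism T) S)
    (hAB : inl ⁻¹' S ⊆ inr ⁻¹' S) (hx : inl x ∈ S) (hy : inl y ∈ S) (hxy : T.Adj x y)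
    (hw : inr w ∉ S) (ha : inl a ∈ S) (hwa : T.Adj w a) : a = x ∨ a = y := by
  have hwA : inl w ∉ S := fun h => hw (hAB h)
  rcases hS.adj_or_adj_of_inr_notMem (hAB hx) (hAB hy) hxy hw with hwx | hwy
  · exact .inl (hS.eq_of_adj_of_adj_of_inl_notMem hT hwA ha hx hwa hwx)
  · exact .inr (hS.eq_of_adj_of_adj_of_inl_notMem hT hwA ha hy hwa hwy)

theorem exists_forall_inr_notMem_adj (hT : T.IsAcyclic) (hnbr : ∀ v, ∃ u, T.Adj v u)
    (hS : IsGeoConvex (compPrism T) S) (hAB : inl ⁻¹' S ⊆ inr ⁻¹' S) (hx : inl x ∈ S)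
    (hy : inl y ∈ S) (hxy : T.Adj x y) (ha : inl a ∈ S) (hax : a ≠ x) (hay : a ≠ y) :
    ∃ c, ∀ w, inr w ∉ S → T.Adj w c := by
  have hnadj : ∀ w, inr w ∉ S → ¬T.Adj w a := fun w hw hwa =>
    (hS.eq_or_eq_of_adj_of_inr_notMem hT hAB hx hy hxy hw ha hwa).elim hax hay
  obtain ⟨c, hac⟩ := hnbr a
  have hc : inr c ∈ S := by
    by_contra hc
    exact hnadj c hc hac.symm
  exact ⟨c, fun w hw => (hS.adj_or_adj_of_inr_notMem (hAB ha) hc hac hw).resolve_left (hnadj w hw)⟩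

theorem edist_le_two_of_preimage_inr_compl_eq_singleton (hnbr : ∀ v, ∃ u, T.Adj v u)
    (hS : IsGeoConvex (compPrism T) S) (hW : (inr ⁻¹' S)ᶜ = {w₀}) (v : V) :
    T.edist v w₀ ≤ 2 := by
  have hW' : ∀ w, inr w ∉ S ↔ w = w₀ := fun w => by rw [← mem_singleton_iff, ← hW]; rfl
  rw [edist_le_two_iff]
  by_cases hv : inr v ∈ S
  swap
  · exact .inl ((hW' v).1 hv)
  by_cases hvb : ∃ b, inr b ∈ S ∧ T.Adj v b
  · obtain ⟨b, hb, hvb⟩ := hvb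
    rcases hS.adj_or_adj_of_inr_notMem hv hb hvb ((hW' w₀).2 rfl) with h | h
    · exact .inr (.inl h.symm)
    · exact .inr (.inr ⟨b, hvb, h.symm⟩)
  · obtain ⟨s, hs⟩ := hnbr v
    exact .inr (.inl ((hW' s).1 (fun h => hvb ⟨s, h, hs⟩) ▸ hs))

theorem edist_le_two_of_forall_inr_notMem_adj {c : V} (hT : T.IsAcyclic)
    (hnbr : ∀ v, ∃ u, T.Adj v u) (hS : IsGeoConvex (compPrism T) S)
    (hc : ∀ w, inr w ∉ S → T.Adj w c) (hw₀ : inr w₀ ∉ S) (hw₁ : inr w₁ ∉ S) (hne : w₀ ≠ w₁)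
    (v : V) : T.edist v c ≤ 2 := by
  rw [edist_le_two_iff]
  by_cases hv : inr v ∈ S
  swap
  · exact .inr (.inl (hc v hv))
  by_cases hvb : ∃ b, inr b ∈ S ∧ T.Adj v b
  · obtain ⟨b, hb, hvb⟩ := hvb
    rcases hS.adj_or_adj_of_inr_notMem hv hb hvb hw₀ with h₀ | h₀
    · exact .inr (.inr ⟨w₀, h₀.symm, hc _ hw₀⟩)
    rcases hS.adj_or_adj_of_inr_notMem hv hb hvb hw₁ with h₁ | h₁
    · exact .inr (.inr ⟨w₁, h₁.symm, hc _ hw₁⟩)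
    have hbc : b = c := hT.commonNeighbors_subsingleton hne ⟨h₀, h₁⟩ ⟨hc _ hw₀, hc _ hw₁⟩
    exact .inr (.inl (hbc ▸ hvb))
  · obtain ⟨s, hs⟩ := hnbr v
    exact .inr (.inr ⟨s, hs, hc s (fun h => hvb ⟨s, h, hs⟩)⟩)

theorem exists_forall_edist_le_two [Finite V] (hT : T.IsAcyclic) (hnbr : ∀ v, ∃ u, T.Adj v u)
    (hS : IsGeoConvex (compPrism T) S) (hAB : inl ⁻¹' S ⊆ inr ⁻¹' S)
    (hcard : (inr ⁻¹' S)ᶜ.ncard < (inl ⁻¹' S).ncard) (hW : (inr ⁻¹' S)ᶜ.Nonempty) :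
    ∃ c, ∀ v, T.edist v c ≤ 2 := by
  rcases hW.exists_eq_singleton_or_nontrivial with ⟨w₀, hw₀⟩ | hW₂
  · exact ⟨w₀, hS.edist_le_two_of_preimage_inr_compl_eq_singleton hnbr hw₀⟩
  obtain ⟨x, y, hx, hy, hxy⟩ := hS.exists_adj_inl_mem hT hnbr hAB hcard
  obtain ⟨a, ha, haxy⟩ : ∃ a ∈ inl ⁻¹' S, a ∉ ({x, y} : Set V) := by
    refine exists_mem_notMem_of_ncard_lt_ncard ?_ (toFinite _)
    have := one_lt_ncard_iff_nontrivial.mpr hW₂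
    have := ncard_pair hxy.ne
    omega
  simp only [mem_insert_iff, mem_singleton_iff, not_or] at haxy
  obtain ⟨c, hc⟩ := hS.exists_forall_inr_notMem_adj hT hnbr hAB hx hy hxy ha haxy.1 haxy.2
  obtain ⟨w₀, hw₀, w₁, hw₁, hne⟩ := hW₂
  exact ⟨c, hS.edist_le_two_of_forall_inr_notMem_adj hT hnbr hc hw₀ hw₁ hne⟩

theorem eq_univ_of_forall_inr_mem (hT : T.Connected) (hS : IsGeoConvex (compPrism T) S)
    (hB : ∀ v, inr v ∈ S) (hA : ∃ a, inl a ∈ S) : S = univ := by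
  have hwalk : ∀ {u v} (_ : T.Walk u v), inl u ∈ S → inl v ∈ S := by
    intro u v p
    induction p with
    | nil => exact id
    | cons h _ ih => exact fun hu => ih (hS.inl_mem_of_adj_of_inr_mem hu (hB _) h)
  obtain ⟨a, ha⟩ := hA
  exact eq_univ_of_forall fun
    | inl v => hwalk (hT a v).some ha
    | inr v => hB v

theorem eq_univ [Finite V] (hT : T.IsTree) (hrad : ∀ c, ∃ v, 2 < T.edist v c)
    (hS : IsGeoConvex (compPrism T) S) (hn : Nat.card V < S.ncard)
    (hΔ : 2 * maxDeg T + 1 < S.ncard) : S = univ := by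
  have hnbr : ∀ v, ∃ u, T.Adj v u := fun v => by
    obtain ⟨w, hw⟩ := hrad v
    have : Nontrivial V := nontrivial_of_ne w v (two_lt_edist_iff.mp hw).1
    exact hT.connected.preconnected.exists_adj_of_nontrivial v
  have hAB := hS.preimage_inl_subset_preimage_inr hT.isAcyclic hn hΔ
  have hcard : (inr ⁻¹' S)ᶜ.ncard < (inl ⁻¹' S).ncard := by
    have := S.ncard_eq_ncard_preimage_inl_add_ncard_preimage_inr
    have := ncard_add_ncard_compl (inr ⁻¹' S)
    omega
  have hB : ∀ v, inr v ∈ S := by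
    by_contra! hB
    obtain ⟨c, hc⟩ := hS.exists_forall_edist_le_two hT.isAcyclic hnbr hAB hcard hB
    obtain ⟨v, hv⟩ := hrad c
    exact (hc v).not_gt hv
  exact hS.eq_univ_of_forall_inr_mem hT.connected hB
    (nonempty_of_ncard_ne_zero (s := inl ⁻¹' S) (by omega))

end IsGeoConvex

theorem stmt7 {V : Type*} [Fintype V] (T : SimpleGraph V) (hT : T.IsTree)
    (hd : 5 ≤ graphDiam T) :
    convexityNumber (compPrism T) = max (Nat.card V) (2 * maxDeg T + 1) := by
  obtain ⟨u, v, huv⟩ := exists_le_dist_of_le_graphDiam (by norm_num) hd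
  have hrad := exists_two_lt_edist_of_five_le_dist hT.connected huv
  refine IsGreatest.csSup_eq ⟨?_, ?_⟩
  · rcases max_choice (Nat.card V) (2 * maxDeg T + 1) with h | h <;> rw [h]
    · exact ⟨range inr, isGeoConvex_range_inr hrad,
        (ne_univ_iff_exists_notMem _).mpr ⟨inl u, by simp⟩, ncard_range_of_injective inr_injective⟩
    · have : Nonempty V := ⟨u⟩
      obtain ⟨c, hc⟩ := exists_vdeg_eq_maxDeg T
      exact ⟨prismStar T c, isGeoConvex_prismStar hT.isAcyclic c,
        (ne_univ_iff_exists_notMem _).mpr ⟨inr c, inr_notMem_prismStar c⟩,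
        by rw [ncard_prismStar, hc]⟩
  · rintro _ ⟨S, hS, hSne, rfl⟩
    by_contra! h
    exact hSne (hS.eq_univ hT hrad ((le_max_left _ _).trans_lt h) ((le_max_right _ _).trans_lt h))
end
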